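/- arXiv:1601.07579 — 2 statements merged into one kernel-verified Lean document; each statement's English description precedes it below -/
import Mathlib

section
/- Let $g, h \in L^2(\mathbb{R}^d)$ be real-valued band-limited functions with $\mathrm{supp}\,\hat{g}, \mathrm{supp}\,\hat{h} \subseteq [-1/2,1/2]^d$, and let $X = D[2\mathbf{s}]^{-1}\mathbb{Z}^d$ where $D[\mathbf{s}] = \mathrm{diag}(s_1,\dots,s_d)$ with all $s_j \geq 1$. If $|g(x)| = |h(x)|$ for all $x \in X$, then $g = h$ or $g = -h$. -/
open MeasureTheory Real Filter
open scoped FourierTransform ENNReal Topology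

noncomputable section

abbrev Ed (d : ℕ) := EuclideanSpace ℝ (Fin d)

def latticePt (d : ℕ) (s : Fin d → ℝ) (n : Fin d → ℤ) : Ed d :=
  (WithLp.equiv 2 (Fin d → ℝ)).symm fun j => (n j : ℝ) / (2 * s j)

def latticePtM (d : ℕ) (M : Matrix (Fin d) (Fin d) ℝ) (s : Fin d → ℝ) (n : Fin d → ℤ) : Ed d :=
  (WithLp.equiv 2 (Fin d → ℝ)).symm ((M.transpose)⁻¹.mulVec fun j => (n j : ℝ) / (2 * s j))

/-!
`g² - h²` is the inverse Fourier transform of `K = G ⋆ G - H ⋆ H`, which is supported in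
`[-1, 1]ᵈ ⊆ box s`. Rescaled by `2 s`, the lattice exponentials `ξ ↦ 𝐞 ⟪ξ, latticePt d s n⟫` are
the characters of the unit torus, whose span is dense in its continuous functions; as `box s`
meets each coset of `∏ⱼ 2 sⱼ ℤ` at most once off its null boundary, vanishing of all samples
forces `K = 0` a.e., hence `g² = h²` everywhere. Finally `g - h` and `g + h` are real-analytic
along every line, with vanishing product: if `(g - h) x₀ ≠ 0`, then `g + h` vanishes on every
line through `x₀`.
-/

open scoped RealInnerProductSpace Convolution Pointwise

lemma differentiable_integral_mul_cexp {α : Type*} [MeasurableSpace α] {μ : Measure α}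
    {F b : α → ℂ} (hF : Integrable F μ) (hb : AEStronglyMeasurable b μ) {C : ℝ}
    (hbC : ∀ a, F a ≠ 0 → ‖b a‖ ≤ C) :
    Differentiable ℂ (fun z => ∫ a, F a * Complex.exp (z * b a) ∂μ) := by
  intro z₀
  set M := Real.exp ((‖z₀‖ + 1) * C)
  have hexp : ∀ a, F a ≠ 0 → ∀ z ∈ Metric.ball z₀ 1, ‖Complex.exp (z * b a)‖ ≤ M := by
    intro a ha z hz
    have hz' : ‖z‖ ≤ ‖z₀‖ + 1 := by
      have := norm_le_norm_add_norm_sub' z z₀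
      rw [Metric.mem_ball, dist_eq_norm] at hz
      linarith
    calc ‖Complex.exp (z * b a)‖ ≤ Real.exp (‖z‖ * ‖b a‖) :=
          norm_mul z (b a) ▸ Complex.norm_exp_le_exp_norm _
      _ ≤ M := Real.exp_le_exp.2 (mul_le_mul hz' (hbC a ha) (norm_nonneg _) (by positivity))
  have hmeas : ∀ z : ℂ, AEStronglyMeasurable (fun a => F a * Complex.exp (z * b a)) μ :=
    fun z => hF.aestronglyMeasurable.mul
      (Complex.continuous_exp.comp_aestronglyMeasurable (hb.const_mul z))
  have hint : Integrable (fun a => F a * Complex.exp (z₀ * b a)) μ := by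
    refine (hF.norm.mul_const M).mono' (hmeas z₀) (Eventually.of_forall fun a => ?_)
    rcases eq_or_ne (F a) 0 with ha | ha
    · simp [ha]
    rw [norm_mul]
    exact mul_le_mul_of_nonneg_left (hexp a ha z₀ (Metric.mem_ball_self one_pos)) (norm_nonneg _)
  refine (hasDerivAt_integral_of_dominated_loc_of_deriv_le (x₀ := z₀)
    (F' := fun z a => F a * (Complex.exp (z * b a) * b a))
    (bound := fun a => ‖F a‖ * (M * C)) (Metric.ball_mem_nhds z₀ one_pos)
    (Eventually.of_forall hmeas) hint
    (hF.aestronglyMeasurable.mul ((Complex.continuous_exp.comp_aestronglyMeasurable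
      (hb.const_mul z₀)).mul hb))
    (Eventually.of_forall fun a z hz => ?_) (hF.norm.mul_const _)
    (Eventually.of_forall fun a z _ => ?_)).2.differentiableAt
  · rcases eq_or_ne (F a) 0 with ha | ha
    · simp [ha]
    rw [norm_mul, norm_mul]
    exact mul_le_mul_of_nonneg_left
      (mul_le_mul (hexp a ha z hz) (hbC a ha) (norm_nonneg _) (Real.exp_nonneg _))
      (norm_nonneg _)
  · simpa [mul_comm] using ((hasDerivAt_id z).mul_const (b a)).cexp.const_mul (F a)

section Fourier

variable {V : Type*} [NormedAddCommGroup V] [InnerProductSpace ℝ V] [FiniteDimensional ℝ V]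
  [MeasurableSpace V] [BorelSpace V]

lemma integrable_fourierChar_mul {f : V → ℂ} (hf : Integrable f) (w : V) :
    Integrable (fun v => (𝐞 ⟪v, w⟫ : ℂ) * f v) := by
  simpa [Circle.smul_def] using (fourierIntegral_convergent_iff (-w)).2 hf

lemma fourierInv_sub_of_integrable {f g : V → ℂ} (hf : Integrable f) (hg : Integrable g)
    (w : V) : 𝓕⁻ (f - g) w = 𝓕⁻ f w - 𝓕⁻ g w := by
  simp only [fourierInv_eq, Circle.smul_def, smul_eq_mul, Pi.sub_apply, mul_sub]
  exact integral_sub (integrable_fourierChar_mul hf w) (integrable_fourierChar_mul hg w)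

lemma fourierInv_add_of_integrable {f g : V → ℂ} (hf : Integrable f) (hg : Integrable g)
    (w : V) : 𝓕⁻ (f + g) w = 𝓕⁻ f w + 𝓕⁻ g w := by
  simp only [fourierInv_eq, Circle.smul_def, smul_eq_mul, Pi.add_apply, mul_add]
  exact integral_add (integrable_fourierChar_mul hf w) (integrable_fourierChar_mul hg w)

lemma fourierInv_mul_convolution {f g : V → ℂ} (hf : Integrable f) (hg : Integrable g) (w : V) :
    𝓕⁻ (f ⋆[ContinuousLinearMap.mul ℂ ℂ] g) w = 𝓕⁻ f w * 𝓕⁻ g w := by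
  simp only [fourierInv_eq_fourier_neg, fourier_mul_convolution_eq hf hg]

lemma analyticOnNhd_fourierInv_line {G : V → ℂ} (hG : Integrable G) (hGc : HasCompactSupport G)
    (x w : V) : AnalyticOnNhd ℝ (fun t : ℝ => 𝓕⁻ G (x + t • w)) Set.univ := by
  obtain ⟨R, hR⟩ := hGc.isCompact.isBounded.subset_closedBall 0
  set F : V → ℂ := fun v => 𝐞 ⟪v, x⟫ * G v
  set b : V → ℂ := fun v => ((2 * π * ⟪v, w⟫ : ℝ) : ℂ) * Complex.I
  have hbC : ∀ v, F v ≠ 0 → ‖b v‖ ≤ 2 * π * (R * ‖w‖) := by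
    intro v hv
    have hvR : ‖v‖ ≤ R := by
      simpa using hR (subset_tsupport G (right_ne_zero_of_mul hv))
    simp only [b, norm_mul, Complex.norm_real, Complex.norm_I, mul_one, Real.norm_eq_abs,
      abs_two, abs_of_pos pi_pos]
    gcongr
    exact (abs_real_inner_le_norm v w).trans (by gcongr)
  have hentire := differentiable_integral_mul_cexp (integrable_fourierChar_mul hG x)
    (by fun_prop : Continuous b).aestronglyMeasurable hbC
  have hline : (fun t : ℝ => 𝓕⁻ G (x + t • w)) =
      (fun z => ∫ v, F v * Complex.exp (z * b v)) ∘ (Complex.ofRealCLM : ℝ → ℂ) := by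
    ext t
    simp only [fourierInv_eq, Circle.smul_def, smul_eq_mul, Function.comp_apply, F, b,
      inner_add_right, real_inner_smul_right, AddChar.map_add_eq_mul, Circle.coe_mul,
      fourierChar_apply, Complex.ofRealCLM_apply]
    congr 1 with v
    rw [← mul_assoc]
    push_cast
    ring_nf
  rw [hline]
  exact fun t _ => (hentire.analyticAt _).restrictScalars.comp (Complex.ofRealCLM.analyticAt t)

lemma fourierInv_eq_zero_or_eq_zero_of_mul_eq_zero {P Q : V → ℂ} (hP : Integrable P)
    (hPc : HasCompactSupport P) (hQ : Integrable Q) (hQc : HasCompactSupport Q)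
    (hPQ : ∀ x, 𝓕⁻ P x * 𝓕⁻ Q x = 0) : 𝓕⁻ P = 0 ∨ 𝓕⁻ Q = 0 := by
  refine or_iff_not_imp_left.2 fun hP0 => ?_
  obtain ⟨x, hx⟩ := Function.ne_iff.1 hP0
  ext y
  rcases (analyticOnNhd_fourierInv_line hP hPc x (y - x)).eq_zero_or_eq_zero_of_mul_eq_zero
    (analyticOnNhd_fourierInv_line hQ hQc x (y - x)) (fun t _ => hPQ _) isPreconnected_univ
    with h | h
  · exact absurd (by simpa using h 0 trivial) hx
  · simpa using h 1 trivial

end Fourier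

section PullbackIntegral

variable {X T : Type*} [TopologicalSpace X] [MeasurableSpace X] [OpensMeasurableSpace X]
  [TopologicalSpace T] [CompactSpace T] {μ : Measure X} {ψ : X → T} {K : X → ℂ}

lemma integrable_comp_mul (hψ : Continuous ψ) (hK : Integrable K μ) (f : C(T, ℂ)) :
    Integrable (fun x => f (ψ x) * K x) μ :=
  hK.bdd_mul (f.continuous.comp hψ).aestronglyMeasurable
    (Eventually.of_forall fun x => f.norm_coe_le_norm (ψ x))

def integralCompMulCLM (hψ : Continuous ψ) (hK : Integrable K μ) : C(T, ℂ) →L[ℂ] ℂ :=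
  LinearMap.mkContinuous
    { toFun := fun f => ∫ x, f (ψ x) * K x ∂μ
      map_add' := fun f g => by
        simp only [ContinuousMap.add_apply, add_mul]
        exact integral_add (integrable_comp_mul hψ hK f) (integrable_comp_mul hψ hK g)
      map_smul' := fun c f => by
        simp only [ContinuousMap.smul_apply, smul_eq_mul, mul_assoc, RingHom.id_apply]
        exact integral_const_mul c _ }
    (∫ x, ‖K x‖ ∂μ) fun f => by
      refine (norm_integral_le_of_norm_le (hK.norm.mul_const ‖f‖)
        (Eventually.of_forall fun x => ?_)).trans_eq (integral_mul_const _ _)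
      rw [norm_mul, mul_comm]
      exact mul_le_mul_of_nonneg_left (f.norm_coe_le_norm _) (norm_nonneg _)

lemma integral_comp_mul_eq_zero_of_mFourier {ι : Type*} [Fintype ι] {ψ : X → UnitAddTorus ι}
    (hψ : Continuous ψ) (hK : Integrable K μ)
    (h : ∀ n, ∫ x, UnitAddTorus.mFourier n (ψ x) * K x ∂μ = 0) (f : C(UnitAddTorus ι, ℂ)) :
    ∫ x, f (ψ x) * K x ∂μ = 0 := by
  have : integralCompMulCLM hψ hK = 0 :=
    ContinuousLinearMap.ext_on
      (Submodule.dense_iff_topologicalClosure_eq_top.2 UnitAddTorus.span_mFourier_closure_eq_top)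
      (by rintro _ ⟨n, rfl⟩; exact h n)
  exact congr($this f)

end PullbackIntegral

lemma exists_continuous_tendsto_indicator {T : Type*} [PseudoEMetricSpace T] {E : Set T}
    (hE : IsClosed E) : ∃ f : ℕ → C(T, ℂ), (∀ k t, ‖f k t‖ ≤ 1) ∧
      ∀ t, Tendsto (fun k => f k t) atTop (𝓝 (E.indicator (fun _ => 1) t)) := by
  have hδ : ∀ k : ℕ, (0 : ℝ) < 1 / (k + 1) := fun k => by positivity
  refine ⟨fun k => ⟨fun t => ((thickenedIndicator (hδ k) E t : ℝ) : ℂ), by fun_prop⟩,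
    fun k t => by simpa using thickenedIndicator_le_one (hδ k) E t, fun t => ?_⟩
  have hlim := tendsto_pi_nhds.1 (thickenedIndicator_tendsto_indicator_closure hδ
    tendsto_one_div_add_atTop_nhds_zero_nat E) t
  rw [hE.closure_eq] at hlim
  have hcoe : E.indicator (fun _ => (1 : ℂ)) t =
      (((E.indicator (fun _ => 1) t : NNReal) : ℝ) : ℂ) := by
    by_cases ht : t ∈ E <;> simp [ht]
  rw [hcoe]
  exact (Complex.continuous_ofReal.comp NNReal.continuous_coe).continuousAt.tendsto.comp hlim

lemma ae_eq_zero_of_forall_integral_comp_mul_eq_zero {X T : Type*} [TopologicalSpace X]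
    [MeasurableSpace X] [BorelSpace X] [MetricSpace T] [CompactSpace T] {μ : Measure X}
    {ψ : X → T} (hψ : Continuous ψ) {K : X → ℂ} (hK : Integrable K μ) {U V : Set X}
    (hV : IsCompact V) (hUV : U ⊆ V) (hKU : ∀ᵐ x ∂μ, x ∉ U → K x = 0)
    (hψUV : ∀ x ∈ U, ∀ y ∈ V, ψ x = ψ y → x = y)
    (h : ∀ f : C(T, ℂ), ∫ x, f (ψ x) * K x ∂μ = 0) : K =ᵐ[μ] 0 := by
  refine ae_eq_zero_of_forall_setIntegral_isClosed_eq_zero hK fun A hA => ?_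
  set E := ψ '' (V ∩ A)
  -- on `U`, where `K` lives, pulling back the indicator of `E` along `ψ` gives that of `A`
  obtain ⟨f, hf1, hf⟩ := exists_continuous_tendsto_indicator ((hV.inter_right hA).image hψ).isClosed
  have hlim : Tendsto (fun k => ∫ x, f k (ψ x) * K x ∂μ) atTop
      (𝓝 (∫ x, E.indicator (fun _ => (1 : ℂ)) (ψ x) * K x ∂μ)) :=
    tendsto_integral_of_dominated_convergence (fun x => ‖K x‖)
      (fun k => (integrable_comp_mul hψ hK (f k)).aestronglyMeasurable) hK.norm
      (fun k => Eventually.of_forall fun x => by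
        rw [norm_mul]; exact mul_le_of_le_one_left (norm_nonneg _) (hf1 k (ψ x)))
      (Eventually.of_forall fun x => (hf (ψ x)).mul_const (K x))
  have hind : (fun x => E.indicator (fun _ => (1 : ℂ)) (ψ x) * K x) =ᵐ[μ] A.indicator K := by
    filter_upwards [hKU] with x hx
    by_cases hxU : x ∈ U
    · by_cases hxA : x ∈ A
      · rw [Set.indicator_of_mem (Set.mem_image_of_mem ψ (show x ∈ V ∩ A from ⟨hUV hxU, hxA⟩)),
          Set.indicator_of_mem hxA, one_mul]
      · have : ψ x ∉ E := by
          rintro ⟨y, ⟨hyV, hyA⟩, hxy⟩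
          exact hxA (hψUV x hxU y hyV hxy.symm ▸ hyA)
        simp [hxA, this]
    · rw [hx hxU, mul_zero, eq_comm, Set.indicator_apply_eq_zero]
      exact fun _ => hx hxU
  rw [← integral_indicator hA.measurableSet, ← integral_congr_ae hind]
  exact tendsto_nhds_unique hlim (tendsto_const_nhds.congr fun k => (h (f k)).symm)

lemma AddCircle.eq_of_coe_eq_of_abs_sub_lt {p x y : ℝ} [Fact (0 < p)]
    (h : (x : AddCircle p) = y) (hxy : |x - y| < p) : x = y := by
  have hx : x ∈ Set.Ico (min x y) (min x y + p) :=
    ⟨min_le_left x y, by cases min_cases x y <;> linarith [abs_lt.1 hxy]⟩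
  have hy : y ∈ Set.Ico (min x y) (min x y + p) :=
    ⟨min_le_right x y, by cases min_cases x y <;> linarith [abs_lt.1 hxy]⟩
  exact (AddCircle.coe_eq_coe_iff_of_mem_Ico hx hy).1 h

section Lattice

variable {d : ℕ}

def box (r : Fin d → ℝ) : Set (Ed d) := {ξ | ∀ j, |ξ j| ≤ r j}

lemma support_subset_box_iff {r : Fin d → ℝ} {F : Ed d → ℂ} :
    Function.support F ⊆ box r ↔ ∀ ξ, (∃ j, r j < |ξ j|) → F ξ = 0 := by
  simp only [Function.support_subset_iff', box, Set.mem_ofPred_eq, not_forall, not_le]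

lemma box_eq_preimage_pi (r : Fin d → ℝ) :
    box r = PiLp.homeomorph 2 _ ⁻¹' Set.univ.pi fun j => Set.Icc (-r j) (r j) := by
  ext ξ
  simp [box, PiLp.homeomorph, abs_le, Pi.le_def, forall_and]

lemma isCompact_box (r : Fin d → ℝ) : IsCompact (box r) := by
  rw [box_eq_preimage_pi, Homeomorph.isCompact_preimage]
  exact isCompact_univ_pi fun j => isCompact_Icc

lemma interior_box (r : Fin d → ℝ) : interior (box r) = {ξ | ∀ j, |ξ j| < r j} := by
  rw [box_eq_preimage_pi, ← Homeomorph.preimage_interior, interior_pi_set Set.finite_univ]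
  ext ξ
  simp [PiLp.homeomorph, abs_lt]

lemma convex_box (r : Fin d → ℝ) : Convex ℝ (box r) := by
  have : box r = ⋂ j, EuclideanSpace.proj j ⁻¹' Set.Icc (-r j) (r j) := by
    ext ξ
    simp [box, abs_le]
  rw [this]
  exact convex_iInter fun j => (convex_Icc _ _).linear_preimage _

lemma box_add_box_subset (r r' : Fin d → ℝ) : box r + box r' ⊆ box (r + r') := by
  rintro _ ⟨ξ, hξ, η, hη, rfl⟩ j
  exact (abs_add_le _ _).trans (add_le_add (hξ j) (hη j))

def torusProj (s : Fin d → ℝ) (ξ : Ed d) : UnitAddTorus (Fin d) :=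
  fun j => ((ξ j / (2 * s j) : ℝ) : UnitAddCircle)

lemma continuous_torusProj (s : Fin d → ℝ) : Continuous (torusProj s) := by
  unfold torusProj
  fun_prop

lemma mFourier_torusProj (s : Fin d → ℝ) (n : Fin d → ℤ) (ξ : Ed d) :
    UnitAddTorus.mFourier n (torusProj s ξ) = 𝐞 ⟪ξ, latticePt d s n⟫ := by
  simp only [UnitAddTorus.mFourier, ContinuousMap.coe_mk, torusProj, fourier_coe_apply,
    fourierChar_apply, latticePt, PiLp.inner_apply]
  rw [← Complex.exp_sum]
  congr 1
  simp only [WithLp.equiv_symm_apply, RCLike.inner_apply, conj_trivial]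
  push_cast
  rw [Finset.mul_sum, Finset.sum_mul]
  refine Finset.sum_congr rfl fun j _ => ?_
  ring

lemma eq_of_torusProj_eq {s : Fin d → ℝ} (hs : ∀ j, 0 < s j) {ξ η : Ed d}
    (hξ : ξ ∈ interior (box s)) (hη : η ∈ box s) (h : torusProj s ξ = torusProj s η) :
    ξ = η := by
  rw [interior_box] at hξ
  ext j
  have hsj : 0 < 2 * s j := by linarith [hs j]
  have hlt : |ξ j / (2 * s j) - η j / (2 * s j)| < 1 := by
    rw [← sub_div, abs_div, abs_of_pos hsj, div_lt_one hsj]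
    linarith [abs_sub (ξ j) (η j), hξ j, hη j]
  exact (div_left_inj' hsj.ne').1 (AddCircle.eq_of_coe_eq_of_abs_sub_lt (congrFun h j) hlt)

theorem ae_eq_zero_of_fourierInv_latticePt_eq_zero {s : Fin d → ℝ} (hs : ∀ j, 0 < s j)
    {K : Ed d → ℂ} (hK : Integrable K) (hKs : Function.support K ⊆ box s)
    (hzero : ∀ n, 𝓕⁻ K (latticePt d s n) = 0) : K =ᵐ[volume] 0 := by
  have hfrontier : ∀ᵐ ξ : Ed d, ξ ∉ frontier (box s) :=
    measure_eq_zero_iff_ae_notMem.1 ((convex_box s).addHaar_frontier volume)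
  refine ae_eq_zero_of_forall_integral_comp_mul_eq_zero (continuous_torusProj s) hK
    (isCompact_box s) interior_subset ?_ (fun ξ hξ η hη => eq_of_torusProj_eq hs hξ hη)
    (integral_comp_mul_eq_zero_of_mFourier (continuous_torusProj s) hK fun n => ?_)
  · filter_upwards [hfrontier] with ξ hξ hξint
    by_contra hKξ
    exact hξ ⟨subset_closure (hKs hKξ), hξint⟩
  · simpa [fourierInv_eq, Circle.smul_def, mFourier_torusProj] using hzero n

lemma fourierInv_sq_eq_sq_of_latticePt {r s : Fin d → ℝ} (hs : ∀ j, 0 < s j)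
    (hrs : ∀ j, 2 * r j ≤ s j) {G H : Ed d → ℂ} (hG : Integrable G)
    (hGr : Function.support G ⊆ box r) (hH : Integrable H) (hHr : Function.support H ⊆ box r)
    (hsamp : ∀ n, 𝓕⁻ G (latticePt d s n) ^ 2 = 𝓕⁻ H (latticePt d s n) ^ 2) (x : Ed d) :
    𝓕⁻ G x ^ 2 = 𝓕⁻ H x ^ 2 := by
  set L := ContinuousLinearMap.mul ℂ ℂ
  have hsupp : ∀ F : Ed d → ℂ, Function.support F ⊆ box r →
      Function.support (F ⋆[L] F) ⊆ box s := fun F hF =>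
    (support_convolution_subset L).trans <| (Set.add_subset_add hF hF).trans <|
      (box_add_box_subset r r).trans fun ξ hξ j =>
        (hξ j).trans (by rw [Pi.add_apply]; linarith [hrs j])
  have hGG := hG.integrable_convolution L hG
  have hHH := hH.integrable_convolution L hH
  have hK : ∀ y, 𝓕⁻ (G ⋆[L] G - H ⋆[L] H) y = 𝓕⁻ G y ^ 2 - 𝓕⁻ H y ^ 2 := fun y => by
    rw [fourierInv_sub_of_integrable hGG hHH, fourierInv_mul_convolution hG hG,
      fourierInv_mul_convolution hH hH, sq, sq]
  have hK0 := ae_eq_zero_of_fourierInv_latticePt_eq_zero hs (hGG.sub hHH)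
    ((Function.support_sub _ _).trans (Set.union_subset (hsupp G hGr) (hsupp H hHr)))
    fun n => by rw [hK, hsamp, sub_self]
  rw [← sub_eq_zero, ← hK, fourierInv_congr_ae hK0]
  simp [fourierInv_eq]

end Lattice

lemma sq_eq_sq_of_norm_eq_of_im_eq_zero {z w : ℂ} (hz : z.im = 0) (hw : w.im = 0)
    (h : ‖z‖ = ‖w‖) : z ^ 2 = w ^ 2 := by
  have hsq : ∀ u : ℂ, u.im = 0 → u ^ 2 = (‖u‖ : ℂ) ^ 2 := fun u hu => by
    rw [← Complex.mul_conj', Complex.conj_eq_iff_im.2 hu, sq]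
  rw [hsq z hz, hsq w hw, h]

theorem stmt0_general (d : ℕ) (g h : Ed d → ℂ)
    (s : Fin d → ℝ) (hs : ∀ j, 1 ≤ s j)
    (hgr : ∀ x, (g x).im = 0) (hhr : ∀ x, (h x).im = 0)
    (hgbl : ∃ G : Ed d → ℂ, Integrable G ∧
      (∀ ξ : Ed d, (∃ j, (1:ℝ)/2 < |ξ j|) → G ξ = 0) ∧ ∀ x, g x = 𝓕⁻ G x)
    (hhbl : ∃ H : Ed d → ℂ, Integrable H ∧
      (∀ ξ : Ed d, (∃ j, (1:ℝ)/2 < |ξ j|) → H ξ = 0) ∧ ∀ x, h x = 𝓕⁻ H x)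
    (hsamp : ∀ n : Fin d → ℤ, ‖g (latticePt d s n)‖ = ‖h (latticePt d s n)‖) :
    g = h ∨ g = -h := by
  obtain ⟨G, hG, hGs, hgG⟩ := hgbl
  obtain ⟨H, hH, hHs, hhH⟩ := hhbl
  obtain rfl : g = 𝓕⁻ G := funext hgG
  obtain rfl : h = 𝓕⁻ H := funext hhH
  have hGbox : Function.support G ⊆ box fun _ => 1 / 2 := support_subset_box_iff.2 hGs
  have hHbox : Function.support H ⊆ box fun _ => 1 / 2 := support_subset_box_iff.2 hHs
  have hGc := HasCompactSupport.of_support_subset_isCompact (isCompact_box _) hGbox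
  have hHc := HasCompactSupport.of_support_subset_isCompact (isCompact_box _) hHbox
  have hsq := fourierInv_sq_eq_sq_of_latticePt (fun j => by linarith [hs j])
    (fun j => by linarith [hs j]) hG hGbox hH hHbox
    fun n => sq_eq_sq_of_norm_eq_of_im_eq_zero (hgr _) (hhr _) (hsamp n)
  rcases fourierInv_eq_zero_or_eq_zero_of_mul_eq_zero (hG.sub hH) (hGc.sub hHc) (hG.add hH)
    (hGc.add hHc) fun x => by
      rw [fourierInv_sub_of_integrable hG hH, fourierInv_add_of_integrable hG hH]
      linear_combination hsq x
    with h0 | h0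
  · exact .inl <| funext fun x => by
      simpa [fourierInv_sub_of_integrable hG hH, sub_eq_zero] using congrFun h0 x
  · exact .inr <| funext fun x => by
      simpa [fourierInv_add_of_integrable hG hH, add_eq_zero_iff_eq_neg] using congrFun h0 x

theorem stmt0 (d : ℕ) (g h : Ed d → ℂ)
    (s : Fin d → ℝ) (hs : ∀ j, 1 ≤ s j)
    (hg2 : MemLp g 2 volume) (hh2 : MemLp h 2 volume)
    (hgr : ∀ x, (g x).im = 0) (hhr : ∀ x, (h x).im = 0)
    (hgbl : ∃ G : Ed d → ℂ, Integrable G ∧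
      (∀ ξ : Ed d, (∃ j, (1:ℝ)/2 < |ξ j|) → G ξ = 0) ∧ ∀ x, g x = 𝓕⁻ G x)
    (hhbl : ∃ H : Ed d → ℂ, Integrable H ∧
      (∀ ξ : Ed d, (∃ j, (1:ℝ)/2 < |ξ j|) → H ξ = 0) ∧ ∀ x, h x = 𝓕⁻ H x)
    (hsamp : ∀ n : Fin d → ℤ, ‖g (latticePt d s n)‖ = ‖h (latticePt d s n)‖) :
    g = h ∨ g = -h :=
  stmt0_general d g h s hs hgr hhr hgbl hhbl hsamp
end
end

section
/- Suppose there exist real-valued band-limited $h_1, h_2 \in L^2(\mathbb{R})$ with $\mathrm{supp}\,\hat{h_j} \subseteq [-1/2,1/2]$, $h_1 \neq \pm h_2$, but $|h_1((2s)^{-1}\mathbb{Z})| = |h_2((2s)^{-1}\mathbb{Z})|$ for some $0 < s < 1$. Then for any $d > 1$, any index $i \in \{1,\dots,d\}$, and any nonzero $f \in L^2(\mathbb{R}^{d-1})$ with $\mathrm{supp}\,\hat{f} \subseteq [-1/2,1/2]^{d-1}$, the functions $g_j(x) = f(x_1,\dots,x_{i-1},x_{i+1},\dots,x_d)\,h_j(x_i)$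 satisfy: $\mathrm{supp}\,\hat{g_j} \subseteq [-1/2,1/2]^d$, $|g_1| = |g_2|$ on the lattice $D[2\mathbf{s}]^{-1}\mathbb{Z}^d$ with $s_i = s$ and $s_k = 1$ for $k \neq i$, yet $g_1 \neq \pm g_2$. -/
/-!
Splitting off the `i`-th coordinate and applying Fubini factors the Fourier transform of the
tensor product: `𝓕 g_j ξ = 𝓕 h_j (ξ i) * 𝓕 f (ξ without ξ i)`, so `g_j` is band-limited to the
cube. On the lattice the `i`-th coordinate runs through `(2s)⁻¹ℤ`, where `|h₁| = |h₂|`, hence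
`|g₁| = |f| |h₁| = |f| |h₂| = |g₂|`. Evaluating at points `(t, y)` with `f y ≠ 0` recovers `h_j`
from `g_j`, so `g₁ = ±g₂` would force `h₁ = ±h₂`.
-/

open MeasureTheory Real Filter
open scoped FourierTransform ENNReal Topology

noncomputable section

open scoped RealInnerProductSpace

section Coordinates

variable {d : ℕ} (i : Fin (d + 1))

def dropCoord (x : Ed (d + 1)) : Ed d :=
  (WithLp.equiv 2 (Fin d → ℝ)).symm fun k => x (i.succAbove k)

def insertCoordEquiv : ℝ × Ed d ≃ᵐ Ed (d + 1) :=
  ((MeasurableEquiv.refl ℝ).prodCongr (MeasurableEquiv.toLp 2 (Fin d → ℝ)).symm).trans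
    ((MeasurableEquiv.piFinSuccAbove (fun _ => ℝ) i).symm.trans (MeasurableEquiv.toLp 2 _))

lemma insertCoordEquiv_apply (z : ℝ × Ed d) :
    insertCoordEquiv i z = WithLp.toLp 2 (i.insertNth z.1 (WithLp.ofLp z.2)) := rfl

lemma measurePreserving_insertCoordEquiv :
    MeasurePreserving (insertCoordEquiv i) (volume.prod volume) volume :=
  ((MeasurePreserving.id volume).prod (PiLp.volume_preserving_ofLp (Fin d))).trans
    (((volume_preserving_piFinSuccAbove (fun _ => ℝ) i).symm).trans
      (PiLp.volume_preserving_toLp (Fin (d + 1))))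

@[simp]
lemma insertCoordEquiv_apply_self (z : ℝ × Ed d) : insertCoordEquiv i z i = z.1 := by
  simp [insertCoordEquiv_apply]

@[simp]
lemma dropCoord_insertCoordEquiv (z : ℝ × Ed d) : dropCoord i (insertCoordEquiv i z) = z.2 := by
  ext k
  simp [dropCoord, insertCoordEquiv_apply]

@[simp]
lemma dropCoord_apply (x : Ed (d + 1)) (k : Fin d) : dropCoord i x k = x (i.succAbove k) := rfl

lemma inner_insertCoordEquiv (z : ℝ × Ed d) (ξ : Ed (d + 1)) :
    ⟪insertCoordEquiv i z, ξ⟫ = z.1 * ξ i + ⟪z.2, dropCoord i ξ⟫ := by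
  simp only [PiLp.inner_apply, Fin.sum_univ_succAbove _ i, insertCoordEquiv_apply]
  simp [mul_comm]

end Coordinates

section Tensor

variable {d : ℕ} (i : Fin (d + 1))

def tensorCoord (f : Ed d → ℂ) (h : ℝ → ℂ) (x : Ed (d + 1)) : ℂ :=
  f (dropCoord i x) * h (x i)

lemma tensorCoord_insertCoordEquiv (f : Ed d → ℂ) (h : ℝ → ℂ) (z : ℝ × Ed d) :
    tensorCoord i f h (insertCoordEquiv i z) = f z.2 * h z.1 := by
  simp [tensorCoord]

lemma tensorCoord_neg (f : Ed d → ℂ) (h : ℝ → ℂ) :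
    tensorCoord i f (-h) = -tensorCoord i f h := by
  ext x
  simp [tensorCoord]

lemma tensorCoord_injective {f : Ed d → ℂ} (hf : f ≠ 0) : Function.Injective (tensorCoord i f) := by
  intro a b hab
  obtain ⟨y, hy⟩ := Function.ne_iff.mp hf
  ext t
  have := congrFun hab (insertCoordEquiv i (t, y))
  simp only [tensorCoord_insertCoordEquiv] at this
  exact mul_left_cancel₀ hy this

lemma fourier_tensorCoord (f : Ed d → ℂ) (h : ℝ → ℂ) (ξ : Ed (d + 1)) :
    𝓕 (tensorCoord i f h) ξ = 𝓕 h (ξ i) * 𝓕 f (dropCoord i ξ) := by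
  rw [Real.fourier_eq, ← (measurePreserving_insertCoordEquiv i).integral_comp',
    fourier_real_eq, Real.fourier_eq, ← integral_prod_mul]
  congr 1 with z
  simp only [inner_insertCoordEquiv, tensorCoord_insertCoordEquiv, neg_add, AddChar.map_add_eq_mul,
    Circle.smul_def, Circle.coe_mul, smul_eq_mul]
  ring

lemma fourier_tensorCoord_eq_zero {f : Ed d → ℂ} {h : ℝ → ℂ} {r : ℝ}
    (hf : ∀ η : Ed d, (∃ j, r < |η j|) → 𝓕 f η = 0) (hh : ∀ t : ℝ, r < |t| → 𝓕 h t = 0)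
    (ξ : Ed (d + 1)) (hξ : ∃ j, r < |ξ j|) : 𝓕 (tensorCoord i f h) ξ = 0 := by
  obtain ⟨j, hj⟩ := hξ
  rw [fourier_tensorCoord]
  rcases eq_or_ne j i with rfl | hji
  · rw [hh _ hj, zero_mul]
  · obtain ⟨k, rfl⟩ := Fin.exists_succAbove_eq hji
    rw [hf _ ⟨k, hj⟩, mul_zero]

end Tensor

section BandLimited

variable {V : Type*} [NormedAddCommGroup V] [InnerProductSpace ℝ V] [FiniteDimensional ℝ V]
  [MeasurableSpace V] [BorelSpace V]

lemma fourier_eq_zero_of_eq_fourierInv {f H : V → ℂ} (hf : Integrable f) (hH : Integrable H)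
    (hfH : ∀ x, f x = 𝓕⁻ H x) {U : Set V} (hU : IsOpen U) (hHU : ∀ ξ ∈ U, H ξ = 0)
    {v : V} (hv : v ∈ U) : 𝓕 f v = 0 := by
  obtain rfl : f = 𝓕⁻ H := funext hfH
  have hFH : Integrable (𝓕 H) := by
    simpa [fourierInv_eq_fourier_neg] using hf.comp_neg
  have hHv : H =ᶠ[𝓝 v] 0 := eventually_of_mem (hU.mem_nhds hv) hHU
  rw [hH.fourier_fourierInv_eq hFH hHv.continuousAt, hHv.eq_of_nhds, Pi.zero_apply]

end BandLimited

theorem stmt4_general (d : ℕ) (i : Fin (d + 1))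
    (h₁ h₂ : ℝ → ℂ)
    (hi1 : Integrable h₁) (hi2 : Integrable h₂)
    (hbl1 : ∃ H : ℝ → ℂ, Integrable H ∧ (∀ ξ : ℝ, (1:ℝ)/2 < |ξ| → H ξ = 0) ∧
      ∀ x, h₁ x = 𝓕⁻ H x)
    (hbl2 : ∃ H : ℝ → ℂ, Integrable H ∧ (∀ ξ : ℝ, (1:ℝ)/2 < |ξ| → H ξ = 0) ∧
      ∀ x, h₂ x = 𝓕⁻ H x)
    (hne : h₁ ≠ h₂ ∧ h₁ ≠ -h₂)
    (s : ℝ)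
    (hsamp : ∀ k : ℤ, ‖h₁ ((k : ℝ) / (2 * s))‖ = ‖h₂ ((k : ℝ) / (2 * s))‖)
    (f : Ed d → ℂ) (hf0 : f ≠ 0) (hfi : Integrable f)
    (hfbl : ∃ F : Ed d → ℂ, Integrable F ∧
      (∀ ξ : Ed d, (∃ j, (1:ℝ)/2 < |ξ j|) → F ξ = 0) ∧ ∀ x, f x = 𝓕⁻ F x) :
    let g₁ : Ed (d + 1) → ℂ := fun x =>
      f ((WithLp.equiv 2 (Fin d → ℝ)).symm fun k => x (i.succAbove k)) * h₁ (x i)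
    let g₂ : Ed (d + 1) → ℂ := fun x =>
      f ((WithLp.equiv 2 (Fin d → ℝ)).symm fun k => x (i.succAbove k)) * h₂ (x i)
    let s' : Fin (d + 1) → ℝ := fun j => if j = i then s else 1
    (∀ ξ : Ed (d + 1), (∃ j, (1:ℝ)/2 < |ξ j|) → 𝓕 g₁ ξ = 0) ∧
    (∀ ξ : Ed (d + 1), (∃ j, (1:ℝ)/2 < |ξ j|) → 𝓕 g₂ ξ = 0) ∧
    (∀ n : Fin (d + 1) → ℤ,
      ‖g₁ (latticePt (d + 1) s' n)‖ = ‖g₂ (latticePt (d + 1) s' n)‖) ∧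
    g₁ ≠ g₂ ∧ g₁ ≠ -g₂ := by
  intro g₁ g₂ s'
  obtain ⟨F, hF, hF0, hfF⟩ := hfbl
  obtain ⟨H₁, hH₁, hH₁0, hh₁⟩ := hbl1
  obtain ⟨H₂, hH₂, hH₂0, hh₂⟩ := hbl2
  have hf : ∀ η : Ed d, (∃ j, (1:ℝ)/2 < |η j|) → 𝓕 f η = 0 := by
    rintro η ⟨j, hj⟩
    have hU : IsOpen {η : Ed d | (1:ℝ)/2 < |η j|} :=
      isOpen_lt continuous_const (continuous_abs.comp (EuclideanSpace.proj j).continuous)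
    exact fourier_eq_zero_of_eq_fourierInv hfi hF hfF hU (fun ξ hξ => hF0 ξ ⟨j, hξ⟩) hj
  have hU : IsOpen {t : ℝ | (1:ℝ)/2 < |t|} := isOpen_lt continuous_const continuous_abs
  refine ⟨fourier_tensorCoord_eq_zero i hf
      fun _ => fourier_eq_zero_of_eq_fourierInv hi1 hH₁ hh₁ hU hH₁0,
    fourier_tensorCoord_eq_zero i hf
      fun _ => fourier_eq_zero_of_eq_fourierInv hi2 hH₂ hh₂ hU hH₂0, fun n => ?_,
    fun h => hne.1 (tensorCoord_injective i hf0 h),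
    fun h => hne.2 (tensorCoord_injective i hf0 (h.trans (tensorCoord_neg i f h₂).symm))⟩
  have hni : latticePt (d + 1) s' n i = n i / (2 * s) := by simp [latticePt, s']
  simp only [g₁, g₂, norm_mul, hni, hsamp]

theorem stmt4 (d : ℕ) (hd : 1 ≤ d) (i : Fin (d + 1))
    (h₁ h₂ : ℝ → ℂ)
    (hr1 : ∀ x, (h₁ x).im = 0) (hr2 : ∀ x, (h₂ x).im = 0)
    (hi1 : Integrable h₁) (hi2 : Integrable h₂)
    (hL1 : MemLp h₁ 2 volume) (hL2 : MemLp h₂ 2 volume)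
    (hbl1 : ∃ H : ℝ → ℂ, Integrable H ∧ (∀ ξ : ℝ, (1:ℝ)/2 < |ξ| → H ξ = 0) ∧
      ∀ x, h₁ x = 𝓕⁻ H x)
    (hbl2 : ∃ H : ℝ → ℂ, Integrable H ∧ (∀ ξ : ℝ, (1:ℝ)/2 < |ξ| → H ξ = 0) ∧
      ∀ x, h₂ x = 𝓕⁻ H x)
    (hne : h₁ ≠ h₂ ∧ h₁ ≠ -h₂)
    (s : ℝ) (hs0 : 0 < s) (hs1 : s < 1)
    (hsamp : ∀ k : ℤ, ‖h₁ ((k : ℝ) / (2 * s))‖ = ‖h₂ ((k : ℝ) / (2 * s))‖)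
    (f : Ed d → ℂ) (hf0 : f ≠ 0) (hfi : Integrable f) (hfL : MemLp f 2 volume)
    (hfbl : ∃ F : Ed d → ℂ, Integrable F ∧
      (∀ ξ : Ed d, (∃ j, (1:ℝ)/2 < |ξ j|) → F ξ = 0) ∧ ∀ x, f x = 𝓕⁻ F x) :
    let g₁ : Ed (d + 1) → ℂ := fun x =>
      f ((WithLp.equiv 2 (Fin d → ℝ)).symm fun k => x (i.succAbove k)) * h₁ (x i)
    let g₂ : Ed (d + 1) → ℂ := fun x =>
      f ((WithLp.equiv 2 (Fin d → ℝ)).symm fun k => x (i.succAbove k)) * h₂ (x i)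
    let s' : Fin (d + 1) → ℝ := fun j => if j = i then s else 1
    (∀ ξ : Ed (d + 1), (∃ j, (1:ℝ)/2 < |ξ j|) → 𝓕 g₁ ξ = 0) ∧
    (∀ ξ : Ed (d + 1), (∃ j, (1:ℝ)/2 < |ξ j|) → 𝓕 g₂ ξ = 0) ∧
    (∀ n : Fin (d + 1) → ℤ,
      ‖g₁ (latticePt (d + 1) s' n)‖ = ‖g₂ (latticePt (d + 1) s' n)‖) ∧
    g₁ ≠ g₂ ∧ g₁ ≠ -g₂ :=
  stmt4_general d i h₁ h₂ hi1 hi2 hbl1 hbl2 hne s hsamp f hf0 hfi hfbl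
end
end
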